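/- arXiv:1507.07798 — 6 statements merged into one kernel-verified Lean document; each statement's English description precedes it below -/
import Mathlib

section
/- Let 0 < α ≤ 1 and let λ ∈ ℂ with λ ≠ 0. If the functional equation E_α(λ x^α) · E_α(λ y^α) = E_α(λ (x+y)^α) holds for all real x, y ≥ 0, then α = 1. -/
/-!
Write `E(t) = E_α(λ t)`. Since `1 / Γ(1 + kα) ≤ 2` for all `k`, the series has bounded coefficients,
so `E(t) = 1 + λ t / Γ(1 + α) + O(t²)` near `0`. Putting `x = y` and `t = x^α` in the functional
equation gives `E(t)² = E(2^α t)` for `t ≥ 0`; comparing the (one-sided) derivatives at `0` yields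
`2 = 2^α`, i.e. `α = 1`.
-/

open Asymptotics Set

section PowerSeries

variable {𝕜 : Type*} [NontriviallyNormedField 𝕜] [CompleteSpace 𝕜] {c : ℕ → 𝕜} {C : ℝ}

lemma norm_tsum_pow_mul_sub_le (hc : ∀ k, ‖c k‖ ≤ C) {z : 𝕜} (hz : ‖z‖ ≤ 1 / 2) :
    ‖∑' k, z ^ k * c k - c 0 - z * c 1‖ ≤ 2 * C * ‖z‖ ^ 2 := by
  have hz1 : ‖z‖ < 1 := hz.trans_lt (by norm_num)
  have hbound : ∀ k, ‖z ^ k * c k‖ ≤ C * ‖z‖ ^ k := fun k => by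
    rw [norm_mul, norm_pow, mul_comm]
    exact mul_le_mul_of_nonneg_right (hc k) (by positivity)
  have hsum : Summable fun k => z ^ k * c k :=
    .of_norm_bounded ((summable_geometric_of_lt_one (norm_nonneg z) hz1).mul_left C) hbound
  have htail : ∑' k, z ^ k * c k - c 0 - z * c 1 = ∑' k, z ^ (k + 2) * c (k + 2) := by
    rw [← hsum.sum_add_tsum_nat_add 2, Finset.sum_range_succ, Finset.sum_range_one]
    ring
  have hgeo := (hasSum_geometric_of_lt_one (norm_nonneg z) hz1).mul_left (C * ‖z‖ ^ 2)
  calc ‖∑' k, z ^ k * c k - c 0 - z * c 1‖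
      ≤ C * ‖z‖ ^ 2 * (1 - ‖z‖)⁻¹ := by
        rw [htail]
        refine tsum_of_norm_bounded hgeo fun k => (hbound (k + 2)).trans_eq ?_
        ring
    _ ≤ C * ‖z‖ ^ 2 * 2 := by
        have hC : 0 ≤ C := (norm_nonneg _).trans (hc 0)
        gcongr
        rw [inv_le_comm₀ (by linarith) two_pos]
        linarith
    _ = 2 * C * ‖z‖ ^ 2 := by ring

lemma hasDerivAt_tsum_pow_mul_zero (hc : ∀ k, ‖c k‖ ≤ C) :
    HasDerivAt (fun z => ∑' k, z ^ k * c k) (c 1) 0 := by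
  have h0 : ∑' k, (0 : 𝕜) ^ k * c k = c 0 := by
    rw [tsum_eq_single 0 fun k hk => by simp [hk]]
    simp
  rw [hasDerivAt_iff_isLittleO, h0]
  simp only [sub_zero, smul_eq_mul]
  refine IsBigO.trans_isLittleO ?_ (isLittleO_pow_id one_lt_two)
  refine .of_bound (2 * C) ?_
  filter_upwards [Metric.closedBall_mem_nhds (0 : 𝕜) (by norm_num : (0 : ℝ) < 1 / 2)] with z hz
  rw [mem_closedBall_zero_iff] at hz
  simpa [mul_comm z] using norm_tsum_pow_mul_sub_le hc hz

end PowerSeries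

lemma Real.one_half_le_Gamma_of_one_le {x : ℝ} (hx : 1 ≤ x) : 1 / 2 ≤ Real.Gamma x := by
  rcases le_or_gt 2 x with h2 | h2
  · calc 1 / 2 ≤ Real.Gamma 2 := by rw [Real.Gamma_two]; norm_num
      _ ≤ Real.Gamma x := Real.Gamma_strictMonoOn_Ici.monotoneOn self_mem_Ici h2 h2
  · have hx0 : 0 < x := by linarith
    have h3 : 1 ≤ Real.Gamma (x + 1) := by
      calc 1 = Real.Gamma 2 := Real.Gamma_two.symm
        _ ≤ Real.Gamma (x + 1) :=
          Real.Gamma_strictMonoOn_Ici.monotoneOn self_mem_Ici (by rw [mem_Ici]; linarith) (by linarith)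
    rw [Real.Gamma_add_one hx0.ne'] at h3
    nlinarith [Real.Gamma_pos_of_pos hx0]

noncomputable def mittagLeffler (α : ℝ) (z : ℂ) : ℂ :=
  ∑' k : ℕ, z ^ k / Complex.Gamma ((1 + k * α : ℝ) : ℂ)

lemma mittagLeffler_zero (α : ℝ) : mittagLeffler α 0 = 1 := by
  rw [mittagLeffler, tsum_eq_single 0 fun k hk => by simp [hk]]
  simp

lemma norm_inv_Gamma_one_add_mul_le {α : ℝ} (hα : 0 ≤ α) (k : ℕ) :
    ‖(Complex.Gamma ((1 + k * α : ℝ) : ℂ))⁻¹‖ ≤ 2 := by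
  have hΓ := Real.one_half_le_Gamma_of_one_le (le_add_of_nonneg_right (by positivity : 0 ≤ k * α))
  rw [Complex.Gamma_ofReal, norm_inv, Complex.norm_real, Real.norm_of_nonneg (by linarith),
    inv_le_comm₀ (by linarith) two_pos]
  linarith

lemma hasDerivAt_mittagLeffler_zero {α : ℝ} (hα : 0 ≤ α) :
    HasDerivAt (mittagLeffler α) (Real.Gamma (1 + α) : ℂ)⁻¹ 0 := by
  have h := hasDerivAt_tsum_pow_mul_zero (norm_inv_Gamma_one_add_mul_le hα)
  simp only [Nat.cast_one, one_mul, Complex.Gamma_ofReal] at h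
  refine h.congr_of_eventuallyEq (.of_forall fun z => ?_)
  simp only [mittagLeffler, div_eq_mul_inv, Complex.Gamma_ofReal]

lemma eq_two_of_sq_eq_comp_mul {𝔸 : Type*} [NormedCommRing 𝔸] [NormedAlgebra ℝ 𝔸]
    {u : ℝ → 𝔸} {d : 𝔸} {c : ℝ} (hu : HasDerivAt u d 0) (hd : d ≠ 0) (hu0 : u 0 = 1)
    (hfe : ∀ t, 0 ≤ t → u t ^ 2 = u (c * t)) : c = 2 := by
  have hsq : HasDerivWithinAt (fun t => u t ^ 2) ((2 : ℝ) • d) (Ici 0) 0 := by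
    simpa [hu0, two_smul, two_mul] using (hu.fun_pow 2).hasDerivWithinAt (s := Ici 0)
  have hcomp : HasDerivWithinAt (fun t => u (c * t)) (c • d) (Ici 0) 0 :=
    (hu.scomp_of_eq 0 (hasDerivAt_const_mul c) (mul_zero c).symm).hasDerivWithinAt
  have hsq' : HasDerivWithinAt (fun t => u t ^ 2) (c • d) (Ici 0) 0 :=
    hcomp.congr_of_mem hfe self_mem_Ici
  exact smul_left_injective ℝ hd ((uniqueDiffWithinAt_Ici 0).eq_deriv _ hsq' hsq)

theorem functional_equation_forces_alpha_eq_one_general (α : ℝ) (hα0 : 0 < α)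
    (lam : ℂ) (hlam : lam ≠ 0)
    (h : ∀ x y : ℝ, 0 ≤ x → 0 ≤ y →
      (∑' k : ℕ, (lam * ((x ^ α : ℝ) : ℂ)) ^ k / Complex.Gamma ((1 + k * α : ℝ) : ℂ)) *
        (∑' k : ℕ, (lam * ((y ^ α : ℝ) : ℂ)) ^ k / Complex.Gamma ((1 + k * α : ℝ) : ℂ)) =
      ∑' k : ℕ, (lam * (((x + y) ^ α : ℝ) : ℂ)) ^ k /
        Complex.Gamma ((1 + k * α : ℝ) : ℂ)) :
    α = 1 := by
  have hfe : ∀ t : ℝ, 0 ≤ t →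
      mittagLeffler α (lam * t) ^ 2 = mittagLeffler α (lam * ((2 ^ α * t : ℝ) : ℂ)) := by
    intro t ht
    have hx : (t ^ α⁻¹) ^ α = t := Real.rpow_inv_rpow ht hα0.ne'
    have h2x : (t ^ α⁻¹ + t ^ α⁻¹) ^ α = 2 ^ α * t := by
      rw [← two_mul, Real.mul_rpow zero_le_two (by positivity), hx]
    simpa [mittagLeffler, sq, hx, h2x] using h (t ^ α⁻¹) (t ^ α⁻¹) (by positivity) (by positivity)
  have hu : HasDerivAt (fun t : ℝ => mittagLeffler α (lam * t))
      ((Real.Gamma (1 + α) : ℂ)⁻¹ * lam) 0 := by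
    refine HasDerivAt.comp_ofReal (e := fun z => mittagLeffler α (lam * z)) ?_
    exact (hasDerivAt_mittagLeffler_zero hα0.le).comp_of_eq (0 : ℂ)
      (hasDerivAt_const_mul lam) (mul_zero lam).symm
  have hΓ : (Real.Gamma (1 + α) : ℂ)⁻¹ ≠ 0 := by
    simpa using (Real.Gamma_pos_of_pos (by linarith : 0 < 1 + α)).ne'
  have h2 := eq_two_of_sq_eq_comp_mul hu (mul_ne_zero hΓ hlam) (by simp [mittagLeffler_zero]) hfe
  exact (Real.rpow_right_inj two_pos (by norm_num)).1 (h2.trans (Real.rpow_one 2).symm)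

/-- If `0 < α ≤ 1`, `λ ≠ 0`, and `E_α(λ x^α) E_α(λ y^α) = E_α(λ (x+y)^α)` for all
`x, y ≥ 0`, then `α = 1`. -/
theorem functional_equation_forces_alpha_eq_one (α : ℝ) (hα0 : 0 < α) (hα1 : α ≤ 1)
    (lam : ℂ) (hlam : lam ≠ 0)
    (h : ∀ x y : ℝ, 0 ≤ x → 0 ≤ y →
      (∑' k : ℕ, (lam * ((x ^ α : ℝ) : ℂ)) ^ k / Complex.Gamma ((1 + k * α : ℝ) : ℂ)) *
        (∑' k : ℕ, (lam * ((y ^ α : ℝ) : ℂ)) ^ k / Complex.Gamma ((1 + k * α : ℝ) : ℂ)) =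
      ∑' k : ℕ, (lam * (((x + y) ^ α : ℝ) : ℂ)) ^ k /
        Complex.Gamma ((1 + k * α : ℝ) : ℂ)) :
    α = 1 :=
  functional_equation_forces_alpha_eq_one_general α hα0 lam hlam h
end

section
/- For every α with 0 < α < 1, A_2(α) ≠ 0; equivalently, 2 Γ(1+α)^2 ≠ Γ(1+2α) for 0 < α < 1, so that A_2(α) = (2 Γ(1+α)^2 − Γ(1+2α)) / ( Γ(1+2α) Γ(1+α)^2 ) is nonzero. -/
/-- For `0 < α < 1`, `A_2(α) = 2/Γ(1+2α) - 1/Γ(1+α)^2 ≠ 0`; equivalently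
`2 Γ(1+α)^2 ≠ Γ(1+2α)`. -/
theorem A_two_ne_zero (α : ℝ) (hα0 : 0 < α) (hα1 : α < 1) :
    (2 / Real.Gamma (1 + 2 * α) - 1 / Real.Gamma (1 + α) ^ 2 ≠ 0) ∧
    (2 * Real.Gamma (1 + α) ^ 2 ≠ Real.Gamma (1 + 2 * α)) := by
  have hA : 0 < Real.Gamma (1 + 2 * α) := Real.Gamma_pos_of_pos (by linarith)
  have hB : 0 < Real.Gamma (1 + α) := Real.Gamma_pos_of_pos (by linarith)
  have hden1 : (0:ℝ) < 2 - α := by linarith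
  have hden2 : (0:ℝ) < 3 - 2 * α := by linarith
  have hne1 : (2 - α : ℝ) ≠ 0 := ne_of_gt hden1
  have hne2 : (3 - 2 * α : ℝ) ≠ 0 := ne_of_gt hden2
  -- Γ(3) = 2
  have hG3 : Real.Gamma 3 = 2 := by
    rw [show (3 : ℝ) = (2 : ℕ) + 1 by norm_num, Real.Gamma_nat_eq_factorial]
    norm_num
  -- Γ(2) = 1
  have hG2 : Real.Gamma 2 = 1 := Real.Gamma_two
  -- Γ(5/2) = (3/4)√π
  have hG52 : Real.Gamma (5 / 2) = 3 / 4 * Real.sqrt Real.pi := by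
    have h12 : Real.Gamma (1 / 2) = Real.sqrt Real.pi := Real.Gamma_one_half_eq
    have h32 : Real.Gamma (3 / 2) = 1 / 2 * Real.sqrt Real.pi := by
      rw [show (3 : ℝ) / 2 = 1 / 2 + 1 by norm_num, Real.Gamma_add_one (by norm_num), h12]
    rw [show (5 : ℝ) / 2 = 3 / 2 + 1 by norm_num, Real.Gamma_add_one (by norm_num), h32]
    ring
  have hπpos : (0 : ℝ) ≤ Real.pi := Real.pi_pos.le
  have hG52pos : 0 < Real.Gamma (5 / 2) := Real.Gamma_pos_of_pos (by norm_num)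
  -- 2 log Γ(5/2) < log 2
  have hnum : 2 * Real.log (Real.Gamma (5 / 2)) < Real.log 2 := by
    have hsq : Real.Gamma (5 / 2) ^ 2 = 9 / 16 * Real.pi := by
      rw [hG52, mul_pow, Real.sq_sqrt hπpos]; ring
    have hlt : Real.Gamma (5 / 2) ^ 2 < 2 := by
      rw [hsq]
      nlinarith [Real.pi_lt_d2]
    calc 2 * Real.log (Real.Gamma (5 / 2)) = Real.log (Real.Gamma (5 / 2) ^ 2) := by
          rw [Real.log_pow]; push_cast; ring
      _ < Real.log 2 := Real.log_lt_log (by positivity) hlt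
  have cv := Real.convexOn_log_Gamma
  -- convexity inequality I1
  have I1 : Real.log (Real.Gamma (1 + 2 * α)) ≤
      α / (2 - α) * Real.log (Real.Gamma 3)
      + (2 - 2 * α) / (2 - α) * Real.log (Real.Gamma (1 + α)) := by
    have h := cv.2 (show (3 : ℝ) ∈ Set.Ioi 0 by norm_num)
      (show (1 + α : ℝ) ∈ Set.Ioi 0 by simp; linarith)
      (show (0:ℝ) ≤ α / (2 - α) from div_nonneg hα0.le hden1.le)
      (show (0:ℝ) ≤ (2 - 2 * α) / (2 - α) from div_nonneg (by linarith) hden1.le)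
      (show α / (2 - α) + (2 - 2 * α) / (2 - α) = 1 by
        field_simp; ring)
    simp only [Function.comp_apply, smul_eq_mul] at h
    rw [show α / (2 - α) * 3 + (2 - 2 * α) / (2 - α) * (1 + α) = 1 + 2 * α by
      field_simp; ring] at h
    exact h
  -- convexity inequality I2
  have I2 : Real.log (Real.Gamma 2) ≤
      1 / (3 - 2 * α) * Real.log (Real.Gamma (1 + α))
      + (2 - 2 * α) / (3 - 2 * α) * Real.log (Real.Gamma (5 / 2)) := by
    have h := cv.2 (show (1 + α : ℝ) ∈ Set.Ioi 0 by simp; linarith)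
      (show (5 / 2 : ℝ) ∈ Set.Ioi 0 by norm_num)
      (show (0:ℝ) ≤ 1 / (3 - 2 * α) from div_nonneg (by norm_num) hden2.le)
      (show (0:ℝ) ≤ (2 - 2 * α) / (3 - 2 * α) from div_nonneg (by linarith) hden2.le)
      (show 1 / (3 - 2 * α) + (2 - 2 * α) / (3 - 2 * α) = 1 by
        field_simp; ring)
    simp only [Function.comp_apply, smul_eq_mul] at h
    rw [show 1 / (3 - 2 * α) * (1 + α) + (2 - 2 * α) / (3 - 2 * α) * (5 / 2) = 2 by
      field_simp; ring] at h
    exact h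
  rw [hG3] at I1
  rw [hG2, Real.log_one] at I2
  -- combine: log Γ(1+2α) < log 2 + 2 log Γ(1+α)
  have I1' : (2 - α) * Real.log (Real.Gamma (1 + 2 * α)) ≤
      α * Real.log 2 + (2 - 2 * α) * Real.log (Real.Gamma (1 + α)) := by
    have h := mul_le_mul_of_nonneg_left I1 hden1.le
    calc (2 - α) * Real.log (Real.Gamma (1 + 2 * α)) ≤
        (2 - α) * (α / (2 - α) * Real.log 2
          + (2 - 2 * α) / (2 - α) * Real.log (Real.Gamma (1 + α))) := h
      _ = α * Real.log 2 + (2 - 2 * α) * Real.log (Real.Gamma (1 + α)) := by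
        field_simp
        all_goals ring
  have I2' : 0 ≤ Real.log (Real.Gamma (1 + α))
      + (2 - 2 * α) * Real.log (Real.Gamma (5 / 2)) := by
    have h := mul_le_mul_of_nonneg_left I2 hden2.le
    calc (0:ℝ) = (3 - 2*α) * 0 := by ring
      _ ≤ (3 - 2*α) * (1 / (3 - 2 * α) * Real.log (Real.Gamma (1 + α))
          + (2 - 2 * α) / (3 - 2 * α) * Real.log (Real.Gamma (5 / 2))) := h
      _ = Real.log (Real.Gamma (1 + α))
          + (2 - 2 * α) * Real.log (Real.Gamma (5 / 2)) := by
        field_simp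
        all_goals ring
  have hlog : Real.log (Real.Gamma (1 + 2 * α)) <
      Real.log 2 + 2 * Real.log (Real.Gamma (1 + α)) := by
    nlinarith [mul_pos (show (0:ℝ) < 2 - 2*α by linarith)
      (show (0:ℝ) < Real.log 2 - 2 * Real.log (Real.Gamma (5/2)) by linarith)]
  have key : Real.Gamma (1 + 2 * α) < 2 * Real.Gamma (1 + α) ^ 2 := by
    have h2 : Real.log 2 + 2 * Real.log (Real.Gamma (1 + α))
        = Real.log (2 * Real.Gamma (1 + α) ^ 2) := by
      rw [Real.log_mul (by norm_num) (by positivity), Real.log_pow]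
      push_cast; ring
    rw [h2] at hlog
    exact (Real.log_lt_log_iff hA (by positivity)).mp hlog
  constructor
  · have h1 : 1 / Real.Gamma (1 + α) ^ 2 < 2 / Real.Gamma (1 + 2 * α) := by
      rw [div_lt_div_iff₀ (by positivity) hA]
      nlinarith
    exact sub_ne_zero.mpr h1.ne'
  · exact key.ne'
end

section
/- For every real x ≥ 0, sin_{1/2}(x^{1/2}) = (2/√π) · e^{-x} · ∫_0^{√x} e^{t²} dt; that is, ∑_{k=0}^∞ (-1)^k x^{k + 1/2} / Γ(k + 3/2) = (2/√π) e^{-x} ∫_0^{√x} e^{t²} dt. -/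
/-!
Substituting `t = √x u` gives `e^{-x} ∫_0^{√x} e^{t²} dt = √x ∫_0^1 e^{-x(1-u²)} du`. Expanding the
exponential and integrating termwise yields `√x ∑ (-x)^n / n! ∫_0^1 (1-u²)^n du`, and the substitution
`u = cos θ` turns this Wallis-type integral into half of `∫_0^π sin^{2n+1} θ dθ`, which equals
`√π n! / (2 Γ(n + 3/2))`.
-/

open Real Set intervalIntegral
open scoped Nat

theorem two_mul_prod_eq_sqrt_pi_mul_factorial_div_Gamma (n : ℕ) :
    2 * ∏ i ∈ Finset.range n, (2 * (i : ℝ) + 2) / (2 * i + 3) = √π * n ! / Gamma (n + 3 / 2) := by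
  induction n with
  | zero =>
    rw [show ((0 : ℕ) : ℝ) + 3 / 2 = 1 / 2 + 1 by norm_num, Gamma_add_one (by norm_num),
      Gamma_one_half_eq]
    field_simp
    simp
  | succ n ih =>
    rw [Finset.prod_range_succ, ← mul_assoc, ih, Nat.factorial_succ, Nat.cast_succ,
      show (n + 1 : ℝ) + 3 / 2 = n + 3 / 2 + 1 by ring, Gamma_add_one (by positivity)]
    have hΓ : Gamma (n + 3 / 2) ≠ 0 := (Gamma_pos_of_pos (by positivity)).ne'
    push_cast
    field_simp

theorem integral_one_sub_sq_pow_eq_integral_sin_pow_odd (n : ℕ) :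
    ∫ t in (-1 : ℝ)..1, (1 - t ^ 2) ^ n = ∫ x in (0 : ℝ)..π, sin x ^ (2 * n + 1) := by
  simpa using (integral_sin_pow_odd_mul_cos_pow (a := 0) (b := π) n 0).symm

theorem integral_one_sub_sq_pow (n : ℕ) :
    ∫ t in (0 : ℝ)..1, (1 - t ^ 2) ^ n = √π * n ! / (2 * Gamma (n + 3 / 2)) := by
  have hcont : Continuous fun t : ℝ => (1 - t ^ 2) ^ n := by fun_prop
  have hsymm : ∫ t in (-1 : ℝ)..0, (1 - t ^ 2) ^ n = ∫ t in (0 : ℝ)..1, (1 - t ^ 2) ^ n := by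
    have := integral_comp_neg (a := (0 : ℝ)) (b := 1) (fun t : ℝ => (1 - t ^ 2) ^ n)
    simp only [neg_sq, neg_zero] at this
    exact this.symm
  have hsplit : (∫ t in (-1 : ℝ)..0, (1 - t ^ 2) ^ n) + ∫ t in (0 : ℝ)..1, (1 - t ^ 2) ^ n =
      ∫ t in (-1 : ℝ)..1, (1 - t ^ 2) ^ n :=
    integral_add_adjacent_intervals (hcont.intervalIntegrable _ _) (hcont.intervalIntegrable _ _)
  rw [hsymm, integral_one_sub_sq_pow_eq_integral_sin_pow_odd, integral_sin_pow_odd,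
    two_mul_prod_eq_sqrt_pi_mul_factorial_div_Gamma] at hsplit
  rw [mul_comm 2, ← div_div, ← hsplit]
  ring

theorem hasSum_integral_pow_div_factorial {f : ℝ → ℝ} {a b : ℝ} (hf : ContinuousOn f (uIcc a b)) :
    HasSum (fun n => ∫ t in a..b, f t ^ n / n !) (∫ t in a..b, exp (f t)) := by
  obtain ⟨C, hC⟩ := isCompact_uIcc.exists_bound_of_continuousOn hf
  refine hasSum_integral_of_dominated_convergence (fun n _ => C ^ n / n !)
    (fun n => ((hf.pow n).div_const _).intervalIntegrable.def'.aestronglyMeasurable)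
    (fun n => .of_forall fun t ht => ?_)
    (.of_forall fun _ _ => summable_pow_div_factorial C) intervalIntegrable_const
    (.of_forall fun t _ => ?_)
  · rw [norm_div, norm_pow, RCLike.norm_natCast]
    gcongr
    exact hC t (uIoc_subset_uIcc ht)
  · rw [exp_eq_exp_ℝ]
    exact NormedSpace.expSeries_div_hasSum_exp (f t)

theorem exp_neg_sq_mul_integral_exp_sq (s : ℝ) :
    exp (-s ^ 2) * ∫ t in (0 : ℝ)..s, exp (t ^ 2) =
      s * ∫ u in (0 : ℝ)..1, exp (-s ^ 2 * (1 - u ^ 2)) := by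
  have := mul_integral_comp_mul_left (a := 0) (b := 1) (f := fun t => exp (t ^ 2)) s
  simp only [mul_zero, mul_one] at this
  rw [← this, ← integral_const_mul, ← integral_const_mul, ← integral_const_mul]
  congr 1 with u
  rw [mul_left_comm, ← exp_add]
  ring_nf

/-- For every `x ≥ 0`,
`sin_{1/2}(x^{1/2}) = ∑ (-1)^k x^{k+1/2}/Γ(k+3/2) = (2/√π) e^{-x} ∫_0^{√x} e^{t²} dt`. -/
theorem sin_half_eq (x : ℝ) (hx : 0 ≤ x) :
    (∑' k : ℕ, (-1 : ℝ) ^ k * x ^ ((k : ℝ) + 1/2) / Real.Gamma ((k : ℝ) + 3/2)) =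
    (2 / Real.sqrt Real.pi) * Real.exp (-x) *
      ∫ t in (0 : ℝ)..Real.sqrt x, Real.exp (t ^ 2) := by
  have hs : √x ^ 2 = x := sq_sqrt hx
  have hterm (n : ℕ) : (-1 : ℝ) ^ n * x ^ ((n : ℝ) + 1 / 2) / Gamma (n + 3 / 2) =
      2 / √π * √x * ∫ u in (0 : ℝ)..1, (-x * (1 - u ^ 2)) ^ n / n ! := by
    simp only [integral_div, mul_pow, integral_const_mul]
    rw [rpow_add' hx (by positivity), rpow_natCast, ← sqrt_eq_rpow, integral_one_sub_sq_pow]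
    have hΓ : Gamma (n + 3 / 2) ≠ 0 := (Gamma_pos_of_pos (by positivity)).ne'
    have hπ : √π ≠ 0 := (sqrt_pos.2 pi_pos).ne'
    field_simp
    ring
  have hint := exp_neg_sq_mul_integral_exp_sq √x
  rw [hs] at hint
  rw [mul_assoc, hint, ← mul_assoc, tsum_congr hterm]
  exact ((hasSum_integral_pow_div_factorial (by fun_prop)).mul_left _).tsum_eq
end

section
/- Let M ≥ 0 be a real number. If E_{1/2}(i M^{1/2}) = 1, that is, if cos_{1/2}(M^{1/2}) = 1 and sin_{1/2}(M^{1/2}) = 0, then M = 0. Hence the fractional trigonometric functions cos_{1/2} and sin_{1/2} admit no positive period in the sense of Jumarie. -/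
open Complex in
/-- If `M ≥ 0` and `E_{1/2}(i M^{1/2}) = 1`, then `M = 0`: the fractional
trigonometric functions for `α = 1/2` have no positive period. -/
theorem no_period_half (M : ℝ) (hM : 0 ≤ M)
    (h : (∑' k : ℕ, (Complex.I * ((M ^ (1/2 : ℝ) : ℝ) : ℂ)) ^ k /
      Complex.Gamma ((1 + k * (1/2 : ℝ) : ℝ) : ℂ)) = 1) :
    M = 0 := by
  set x : ℝ := M ^ (1/2 : ℝ) with hxdef
  set f : ℕ → ℂ := fun k => (Complex.I * (x : ℂ)) ^ k /
      Complex.Gamma ((1 + k * (1/2 : ℝ) : ℝ) : ℂ) with hf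
  have hsum : Summable f := by
    by_contra hns
    rw [tsum_eq_zero_of_not_summable hns] at h
    exact one_ne_zero h.symm
  have hre : (∑' k, (f k).re) = 1 := by
    rw [← Complex.re_tsum hsum, h, Complex.one_re]
  -- compute the real part of each term
  have hterm : ∀ k, (f k).re = x ^ k * (Complex.I ^ k).re / Real.Gamma (1 + k * (1/2 : ℝ)) := by
    intro k
    rw [hf]
    simp only [mul_pow]
    rw [Complex.Gamma_ofReal, ← Complex.ofReal_pow, mul_comm (Complex.I ^ k),
      Complex.div_ofReal_re, Complex.re_ofReal_mul]
  have hodd : ∀ m : ℕ, (f (2 * m + 1)).re = 0 := by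
    intro m
    rw [hterm]
    have : (Complex.I ^ (2 * m + 1)).re = 0 := by
      rw [pow_succ, pow_mul, Complex.I_sq]
      have h9 : ((-1 : ℂ)) ^ m = (((-1 : ℝ) ^ m : ℝ) : ℂ) := by push_cast; ring
      rw [h9, Complex.re_ofReal_mul, Complex.I_re, mul_zero]
    rw [this]
    simp
  have heven : ∀ m : ℕ, (f (2 * m)).re = (-(x ^ 2)) ^ m / m.factorial := by
    intro m
    rw [hterm]
    have h1 : (Complex.I ^ (2 * m)).re = (-1 : ℝ) ^ m := by
      rw [pow_mul, Complex.I_sq]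
      norm_cast
    have h2 : (1 + (2 * m : ℕ) * (1/2 : ℝ)) = (m + 1 : ℝ) := by push_cast; ring
    rw [h1, h2]
    rw [show ((m : ℝ) + 1) = ((m : ℕ) : ℝ) + 1 by push_cast; ring,
      Real.Gamma_nat_eq_factorial]
    have h3 : (-(x ^ 2)) ^ m = (-1 : ℝ) ^ m * x ^ (2 * m) := by
      rw [neg_pow, ← pow_mul]
    rw [h3]; ring
  -- reduce to the even subsequence
  have hinj : Function.Injective (fun m : ℕ => 2 * m) := mul_right_injective₀ two_ne_zero
  have hrange : Function.support (fun k => (f k).re) ⊆ Set.range (fun m : ℕ => 2 * m) := by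
    intro k hk
    rcases Nat.even_or_odd k with ⟨m, hm⟩ | ⟨m, hm⟩
    · exact ⟨m, by show 2 * m = k; omega⟩
    · exact absurd (by rw [hm]; exact hodd m) hk
  have hsum2 : (∑' m : ℕ, (f (2 * m)).re) = 1 := by
    rw [hinj.tsum_eq hrange]; exact hre
  have hexp : Real.exp (-(x ^ 2)) = 1 := by
    rw [Real.exp_eq_exp_ℝ, NormedSpace.exp_eq_tsum_div]
    rw [← hsum2]
    exact tsum_congr fun m => (heven m).symm
  have hx2 : x ^ 2 = 0 := by
    have := Real.exp_eq_one_iff (-(x ^ 2)) |>.mp hexp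
    linarith
  have hx0 : x = 0 := by nlinarith
  have : M ^ (1/2 : ℝ) = 0 := hx0
  rwa [Real.rpow_eq_zero hM (by norm_num)] at this
end

section
/- Let 0 < α ≤ 1. Then Γ(3/2 − α) = √π · Γ(2 − α) if and only if α = 1. Consequently, for x > 0 the two expressions x^{1−α}/Γ(2−α) (the fractional derivative D^α of x = (x^{1/2})², computed by the power rule) and √π · x^{1−α}/Γ(3/2 − α) (the value 2 x^{1/2} D^α(x^{1/2}) produced by Jumarie's product rule D^α(fg) = g D^α f + f D^α g with f = g = x^{1/2}) agree only when α = 1. -/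
/-!
Writing `β = 1 - α`, the claim is `Γ(β + 1/2) < √π Γ(β + 1)` for `β > 0`. By
`Γ(u) Γ(v) = Γ(u + v) B(u, v)`, the ratio `Γ(u) / Γ(u + 1/2) = B(u, 1/2) / √π` is strictly
decreasing in `u`, because the integrand `x ^ (u - 1) (1 - x) ^ (-1/2)` of the Beta integral
decreases pointwise on `(0, 1)`; comparing `u = β + 1/2` with `u = 1/2` gives the inequality.
The second statement reduces to the first after cross-multiplying by the positive factors
`x ^ (1 - α)`, `Γ(2 - α)` and `Γ(3/2 - α)`.
-/

open MeasureTheory Set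

namespace Real

noncomputable def betaIntegral (u v : ℝ) : ℝ :=
  ∫ x in (0 : ℝ)..1, x ^ (u - 1) * (1 - x) ^ (v - 1)

lemma ofReal_betaIntegrand {u v x : ℝ} (hx : x ∈ Icc (0 : ℝ) 1) :
    ((x ^ (u - 1) * (1 - x) ^ (v - 1) : ℝ) : ℂ) =
      (x : ℂ) ^ ((u : ℂ) - 1) * (1 - (x : ℂ)) ^ ((v : ℂ) - 1) := by
  rw [Complex.ofReal_mul, Complex.ofReal_cpow hx.1, Complex.ofReal_cpow (sub_nonneg.2 hx.2)]
  push_cast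
  rfl

lemma ofReal_betaIntegral (u v : ℝ) : (betaIntegral u v : ℂ) = Complex.betaIntegral u v := by
  rw [betaIntegral, Complex.betaIntegral, ← intervalIntegral.integral_ofReal]
  refine intervalIntegral.integral_congr fun x hx => ?_
  rw [uIcc_of_le zero_le_one] at hx
  exact ofReal_betaIntegrand hx

lemma intervalIntegrable_betaIntegrand {u v : ℝ} (hu : 0 < u) (hv : 0 < v) :
    IntervalIntegrable (fun x : ℝ => x ^ (u - 1) * (1 - x) ^ (v - 1)) volume 0 1 := by
  have h := Complex.betaIntegral_convergent (u := u) (v := v) (by simpa) (by simpa)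
  refine IntervalIntegrable.congr_ae ⟨h.1.re, h.2.re⟩ ?_
  rw [uIoc_of_le zero_le_one]
  refine (ae_restrict_iff' measurableSet_Ioc).2 (ae_of_all _ fun x hx => ?_)
  simp only [← ofReal_betaIntegrand (Ioc_subset_Icc_self hx)]
  exact Complex.ofReal_re _

lemma Gamma_mul_Gamma_eq_betaIntegral {u v : ℝ} (hu : 0 < u) (hv : 0 < v) :
    Gamma u * Gamma v = Gamma (u + v) * betaIntegral u v := by
  have h := Complex.Gamma_mul_Gamma_eq_betaIntegral (s := u) (t := v) (by simpa) (by simpa)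
  rw [← ofReal_betaIntegral, ← Complex.ofReal_add, Complex.Gamma_ofReal, Complex.Gamma_ofReal,
    Complex.Gamma_ofReal] at h
  exact_mod_cast h

lemma betaIntegral_lt_betaIntegral_left {u u' v : ℝ} (hu : 0 < u) (huu' : u < u') (hv : 0 < v) :
    betaIntegral u' v < betaIntegral u v := by
  have hi := intervalIntegrable_betaIntegrand hu hv
  have hi' := intervalIntegrable_betaIntegrand (hu.trans huu') hv
  rw [← sub_pos, betaIntegral, betaIntegral, ← intervalIntegral.integral_sub hi hi']
  refine intervalIntegral.intervalIntegral_pos_of_pos_on (hi.sub hi') (fun x hx => ?_) one_pos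
  rw [sub_pos]
  exact mul_lt_mul_of_pos_right (rpow_lt_rpow_of_exponent_gt hx.1 hx.2 (by linarith))
    (rpow_pos_of_pos (sub_pos.2 hx.2) _)

theorem Gamma_div_Gamma_add_strictAntiOn {v : ℝ} (hv : 0 < v) :
    StrictAntiOn (fun u => Gamma u / Gamma (u + v)) (Ioi 0) := by
  intro u hu u' hu' huu'
  have hB (w : ℝ) (hw : 0 < w) : Gamma w / Gamma (w + v) = betaIntegral w v / Gamma v := by
    rw [div_eq_div_iff (Gamma_pos_of_pos (by linarith)).ne' (Gamma_pos_of_pos hv).ne',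
      Gamma_mul_Gamma_eq_betaIntegral hw hv, mul_comm]
  simp only [hB u hu, hB u' hu']
  exact div_lt_div_of_pos_right (betaIntegral_lt_betaIntegral_left hu huu' hv) (Gamma_pos_of_pos hv)

theorem Gamma_add_half_lt_sqrt_pi_mul_Gamma_add_one {β : ℝ} (hβ : 0 < β) :
    Gamma (β + 1 / 2) < √π * Gamma (β + 1) := by
  have h := Gamma_div_Gamma_add_strictAntiOn (v := 1 / 2) one_half_pos
    (mem_Ioi.2 one_half_pos) (mem_Ioi.2 (by linarith : (0:ℝ) < β + 1 / 2)) (by linarith)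
  norm_num only [add_halves, Gamma_one_half_eq, Gamma_one, div_one] at h
  rwa [add_assoc, add_halves, div_lt_iff₀ (Gamma_pos_of_pos (by linarith))] at h

end Real

open Real

theorem Gamma_three_halves_sub_eq_sqrt_pi_mul_iff {α : ℝ} (hα1 : α ≤ 1) :
    Gamma (3 / 2 - α) = √π * Gamma (2 - α) ↔ α = 1 := by
  refine ⟨fun h => ?_, fun h => ?_⟩
  · by_contra hne
    have hlt := Gamma_add_half_lt_sqrt_pi_mul_Gamma_add_one (β := 1 - α)
      (sub_pos.2 (lt_of_le_of_ne hα1 hne))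
    rw [show 1 - α + 1 / 2 = 3 / 2 - α by ring, show 1 - α + 1 = 2 - α by ring] at hlt
    exact hlt.ne h
  · subst h
    norm_num [Gamma_one_half_eq]

theorem product_rule_fails_general (α : ℝ) (hα1 : α ≤ 1) :
    (Real.Gamma (3/2 - α) = Real.sqrt Real.pi * Real.Gamma (2 - α) ↔ α = 1) ∧
    (∀ x : ℝ, 0 < x →
      (x ^ (1 - α) / Real.Gamma (2 - α) =
        Real.sqrt Real.pi * x ^ (1 - α) / Real.Gamma (3/2 - α) ↔ α = 1)) := by
  refine ⟨Gamma_three_halves_sub_eq_sqrt_pi_mul_iff hα1, fun x hx => ?_⟩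
  have hG2 : Gamma (2 - α) ≠ 0 := (Gamma_pos_of_pos (by linarith)).ne'
  have hG3 : Gamma (3 / 2 - α) ≠ 0 := (Gamma_pos_of_pos (by linarith)).ne'
  rw [div_eq_div_iff hG2 hG3, mul_comm √π, mul_assoc,
    mul_right_inj' (rpow_pos_of_pos hx _).ne']
  exact Gamma_three_halves_sub_eq_sqrt_pi_mul_iff hα1

/-- For `0 < α ≤ 1`: `Γ(3/2 - α) = √π Γ(2 - α)` iff `α = 1`; consequently, for
`x > 0`, `x^{1-α}/Γ(2-α) = √π x^{1-α}/Γ(3/2-α)` iff `α = 1` (failure of Jumarie's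
product rule). -/
theorem product_rule_fails (α : ℝ) (hα0 : 0 < α) (hα1 : α ≤ 1) :
    (Real.Gamma (3/2 - α) = Real.sqrt Real.pi * Real.Gamma (2 - α) ↔ α = 1) ∧
    (∀ x : ℝ, 0 < x →
      (x ^ (1 - α) / Real.Gamma (2 - α) =
        Real.sqrt Real.pi * x ^ (1 - α) / Real.Gamma (3/2 - α) ↔ α = 1)) :=
  product_rule_fails_general α hα1
end

section
/- Let 0 < α ≤ 1. Then Γ(3/2 − α) = 2^{α−1} · √π · Γ(2 − α) if and only if α = 1. Consequently, for x > 0 the expressions x^{1−α}/Γ(2−α) (the fractional derivative D^α x computed by the power rule, with x = f(u(x)), f(u) = u^{1/2}, u(x) = x²) and 2^{α−1} √π x^{1−α}/Γ(3/2 − α) (the value (D^α_u f)|_{u = x²} · (du/dx)^α produced by Jumarie's chain rule) agree only when α = 1. -/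
open Set Real

/-- `log ∘ Γ` is strictly convex on `(0, ∞)`: it equals
`(log ∘ Γ)(x+1) - log x`, a convex function plus a strictly convex one. -/
lemma strictConvexOn_log_Gamma' :
    StrictConvexOn ℝ (Set.Ioi (0:ℝ)) (Real.log ∘ Real.Gamma) := by
  have h1 : ConvexOn ℝ (Set.Ioi (0:ℝ)) (fun x => Real.log (Real.Gamma (x + 1))) := by
    refine ⟨convex_Ioi 0, fun x hx y hy a b ha hb hab => ?_⟩
    have hx1 : x + 1 ∈ Set.Ioi (0:ℝ) := by simp at hx ⊢; linarith
    have hy1 : y + 1 ∈ Set.Ioi (0:ℝ) := by simp at hy ⊢; linarith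
    have := Real.convexOn_log_Gamma.2 hx1 hy1 ha hb hab
    simp only [Function.comp_apply, smul_eq_mul] at this ⊢
    have harr : a * (x + 1) + b * (y + 1) = a * x + b * y + 1 := by
      have : a * (x + 1) + b * (y + 1) = a * x + b * y + (a + b) := by ring
      rw [this, hab]
    rw [← harr]
    exact this
  have h2 : StrictConvexOn ℝ (Set.Ioi (0:ℝ)) (fun x : ℝ => -Real.log x) :=
    strictConcaveOn_log_Ioi.neg
  have h3 := h1.add_strictConvexOn h2
  refine h3.congr fun x hx => ?_
  have hx0 : (0:ℝ) < x := hx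
  have hg : Real.Gamma (x + 1) = x * Real.Gamma x := Real.Gamma_add_one hx0.ne'
  simp only [Function.comp_apply, Pi.add_apply]
  rw [hg, Real.log_mul hx0.ne' (Real.Gamma_pos_of_pos hx0).ne']
  ring

/-- The key strict inequality for `0 < α < 1`. -/
lemma key_lt (α : ℝ) (h0 : 0 < α) (h1 : α < 1) :
    Real.Gamma (3/2 - α) < (2:ℝ) ^ (α - 1) * Real.sqrt Real.pi * Real.Gamma (2 - α) := by
  -- duplication formula at s = 1 - α/2
  have hdup := Real.Gamma_mul_Gamma_add_half (1 - α / 2)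
  have e1 : (1 - α / 2) + 1 / 2 = 3/2 - α/2 := by ring
  have e2 : 2 * (1 - α / 2) = 2 - α := by ring
  have e3 : 1 - (2 - α) = α - 1 := by ring
  rw [e1, e2, e3] at hdup
  -- strict convexity of log Γ at the four points
  set f := Real.log ∘ Real.Gamma with hf
  have hc : (1 - α/2 : ℝ) ∈ Set.Ioi (0:ℝ) := by simp; linarith
  have hd : (3/2 - α/2 : ℝ) ∈ Set.Ioi (0:ℝ) := by simp; linarith
  have hne : (1 - α/2 : ℝ) ≠ 3/2 - α/2 := by intro h; linarith [h]
  have hA := strictConvexOn_log_Gamma'.2 hc hd hne h0 (by linarith : (0:ℝ) < 1 - α)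
    (by ring : α + (1 - α) = 1)
  have hB := strictConvexOn_log_Gamma'.2 hc hd hne (by linarith : (0:ℝ) < 1 - α) h0
    (by ring : (1 - α) + α = 1)
  simp only [smul_eq_mul] at hA hB
  have eA : α * (1 - α/2) + (1 - α) * (3/2 - α/2) = 3/2 - α := by ring
  have eB : (1 - α) * (1 - α/2) + α * (3/2 - α/2) = 1 := by ring
  rw [eA] at hA
  rw [eB] at hB
  have hsum : f (3/2 - α) + f 1 < f (1 - α/2) + f (3/2 - α/2) := by linarith
  -- exponentiate
  have pa : 0 < Real.Gamma (3/2 - α) := Real.Gamma_pos_of_pos (by linarith)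
  have pc : 0 < Real.Gamma (1 - α/2) := Real.Gamma_pos_of_pos (by linarith)
  have pd : 0 < Real.Gamma (3/2 - α/2) := Real.Gamma_pos_of_pos (by linarith)
  have hlog : Real.log (Real.Gamma (3/2 - α) * Real.Gamma 1)
      < Real.log (Real.Gamma (1 - α/2) * Real.Gamma (3/2 - α/2)) := by
    rw [Real.log_mul pa.ne' (by rw [Real.Gamma_one]; norm_num),
      Real.log_mul pc.ne' pd.ne']
    simpa [hf] using hsum
  have := (Real.log_lt_log_iff (by positivity) (by positivity)).mp hlog
  rw [Real.Gamma_one, mul_one] at this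
  calc Real.Gamma (3/2 - α) < Real.Gamma (1 - α/2) * Real.Gamma (3/2 - α/2) := this
    _ = (2:ℝ) ^ (α - 1) * Real.sqrt Real.pi * Real.Gamma (2 - α) := by
        rw [hdup]; ring

/-- For `0 < α ≤ 1`: `Γ(3/2 - α) = 2^{α-1} √π Γ(2 - α)` iff `α = 1`; consequently,
for `x > 0`, `x^{1-α}/Γ(2-α) = 2^{α-1} √π x^{1-α}/Γ(3/2-α)` iff `α = 1` (failure of
Jumarie's chain rule). -/
theorem chain_rule_fails (α : ℝ) (hα0 : 0 < α) (hα1 : α ≤ 1) :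
    (Real.Gamma (3/2 - α) = (2 : ℝ) ^ (α - 1) * Real.sqrt Real.pi * Real.Gamma (2 - α)
      ↔ α = 1) ∧
    (∀ x : ℝ, 0 < x →
      (x ^ (1 - α) / Real.Gamma (2 - α) =
        (2 : ℝ) ^ (α - 1) * Real.sqrt Real.pi * x ^ (1 - α) / Real.Gamma (3/2 - α)
        ↔ α = 1)) := by
  have hiff : Real.Gamma (3/2 - α)
      = (2 : ℝ) ^ (α - 1) * Real.sqrt Real.pi * Real.Gamma (2 - α) ↔ α = 1 := by
    constructor
    · intro h
      by_contra hne
      exact (key_lt α hα0 (lt_of_le_of_ne hα1 hne)).ne h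
    · rintro rfl
      norm_num [Real.Gamma_one, Real.Gamma_one_half_eq]
  refine ⟨hiff, fun x hx => ?_⟩
  rw [← hiff]
  have hxp : (0:ℝ) < x ^ (1 - α) := Real.rpow_pos_of_pos hx _
  have p2 : 0 < Real.Gamma (2 - α) := Real.Gamma_pos_of_pos (by linarith)
  have p3 : 0 < Real.Gamma (3/2 - α) := Real.Gamma_pos_of_pos (by linarith)
  rw [div_eq_div_iff p2.ne' p3.ne']
  constructor
  · intro h
    have h' : x ^ (1 - α) * Real.Gamma (3/2 - α)
        = x ^ (1 - α) * ((2:ℝ) ^ (α - 1) * Real.sqrt Real.pi * Real.Gamma (2 - α)) := by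
      rw [h]; ring
    exact mul_left_cancel₀ hxp.ne' h'
  · intro h
    rw [h]; ring
end
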